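/- arXiv:1206.1216 — 5 statements merged into one kernel-verified Lean document; each statement's English description precedes it below -/
import Mathlib

section
/- Let A be a commutative unital ring, X an alphabet, and ⋆ a bilinear product on the free A-module A⟨X⟩ satisfying: 1⋆w = w⋆1 = w for all words w, and au⋆bv = a(u⋆bv) + b(au⋆v) + [a,b](u⋆v) for letters a,b and words u,v, where [·,·]: AX×AX → AX is a bilinear bracket on degree-1 monomials satisfying [a,0]=0, [a,b]=[b,a], and [[a,b],c]=[a,[b,c]]. Then ⋆ is commutative: w₁⋆w₂ = w₂⋆w₁ for all words w₁,w₂. -/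
open Finsupp Finset Filter

/-- A word `w` seen as an element of the free module `A⟨X⟩` (coefficient 1). -/
noncomputable def delta (A : Type*) [CommRing A] {X : Type*} (w : List X) : List X →₀ A :=
  Finsupp.single w 1

/-- Left concatenation by a letter, as a linear map on `A⟨X⟩`. -/
noncomputable def lcons (A : Type*) [CommRing A] {X : Type*} (x : X) :
    (List X →₀ A) →ₗ[A] (List X →₀ A) :=
  Finsupp.lmapDomain A A (List.cons x)

/-- any product `⋆ ∈ 𝒫` (bilinear, unit the empty word, recursion with a
symmetric associative bracket on degree-1 monomials) is commutative. -/
theorem stmt0 {A X : Type*} [CommRing A]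
    (star : (List X →₀ A) →ₗ[A] (List X →₀ A) →ₗ[A] (List X →₀ A))
    (brC : X → X → A) (brX : X → X → X)
    (hunitl : ∀ w : List X, star (delta A []) (delta A w) = delta A w)
    (hunitr : ∀ w : List X, star (delta A w) (delta A []) = delta A w)
    (hrec : ∀ (a b : X) (u v : List X),
      star (delta A (a :: u)) (delta A (b :: v)) =
        lcons A a (star (delta A u) (delta A (b :: v)))
          + lcons A b (star (delta A (a :: u)) (delta A v))
          + brC a b • lcons A (brX a b) (star (delta A u) (delta A v)))
    (hsym : ∀ a b : X, brC a b • delta A [brX a b] = brC b a • delta A [brX b a])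
    (hassoc : ∀ a b c : X,
      (brC a b * brC (brX a b) c) • delta A [brX (brX a b) c]
        = (brC b c * brC a (brX b c)) • delta A [brX a (brX b c)]) :
    ∀ w₁ w₂ : List X, star (delta A w₁) (delta A w₂) = star (delta A w₂) (delta A w₁) := by
  classical
  have key : ∀ (a b : X) (p : List X →₀ A),
      brC a b • lcons A (brX a b) p = brC b a • lcons A (brX b a) p := by
    intro a b p
    by_cases h : brX a b = brX b a
    · have h1 := congrArg (fun f => f [brX a b]) (hsym a b)
      simp [delta, Finsupp.single_apply, h] at h1
      rw [h, h1]
    · have h1 := congrArg (fun f => f [brX a b]) (hsym a b)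
      have h2 := congrArg (fun f => f [brX b a]) (hsym a b)
      simp [delta, Finsupp.single_apply, h, Ne.symm h] at h1 h2
      rw [h1, ← h2, zero_smul, zero_smul]
  suffices H : ∀ n (w₁ w₂ : List X), w₁.length + w₂.length = n →
      star (delta A w₁) (delta A w₂) = star (delta A w₂) (delta A w₁) from
    fun w₁ w₂ => H _ w₁ w₂ rfl
  intro n
  induction n using Nat.strong_induction_on with
  | _ n ih =>
    intro w₁ w₂ hn
    match w₁, w₂ with
    | [], w₂ => rw [hunitl, hunitr]
    | w₁, [] => rw [hunitl, hunitr]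
    | a::u, b::v =>
      simp only [List.length_cons] at hn
      have h1 : star (delta A u) (delta A (b::v)) = star (delta A (b::v)) (delta A u) :=
        ih (u.length + (b::v).length) (by simp; omega) _ _ rfl
      have h2 : star (delta A (a::u)) (delta A v) = star (delta A v) (delta A (a::u)) :=
        ih ((a::u).length + v.length) (by simp; omega) _ _ rfl
      have h3 : star (delta A u) (delta A v) = star (delta A v) (delta A u) :=
        ih (u.length + v.length) (by omega) _ _ rfl
      rw [hrec, hrec, h1, h2, h3, key]
      abel
end

section
/- Let ⋆ ∈ 𝒫, i.e. a bilinear product on A⟨X⟩ with unit the empty word and recursion au⋆bv = a(u⋆bv) + b(au⋆v) + [a,b](u⋆v) for a symmetric bracket [·,·] on AX satisfying [[a,b],c]=[a,[b,c]]. Then ⋆ is associative: (w₁⋆w₂)⋆w₃ = w₁⋆(w₂⋆w₃) for all words w₁,w₂,w₃, so (A⟨X⟩, ⋆) is a commutative A-algebra. -/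
/-!
By bilinearity the defining recursion holds for `lcons a m ⋆ lcons b n` with arbitrary `m, n`.
Expanding `(au ⋆ bv) ⋆ ct` and `au ⋆ (bv ⋆ ct)` twice each gives seven terms on either side;
six of them agree by induction on the total length of the words, and the seventh, carrying
the double bracket `[[a,b],c]` resp. `[a,[b,c]]`, agrees by associativity of the bracket.
Commutativity is the same induction, with symmetry of the bracket in place of associativity.
-/

open Finsupp Finset Filter

namespace StarProduct

variable {A X : Type*} [CommRing A]

theorem lcons_delta (x : X) (w : List X) : lcons A x (delta A w) = delta A (x :: w) := by
  simp [lcons, delta]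

theorem single_eq_smul_delta (w : List X) (r : A) : single w r = r • delta A w :=
  (smul_single_one w r).symm

theorem linearMap_ext_delta {M : Type*} [AddCommGroup M] [Module A M]
    {f g : (List X →₀ A) →ₗ[A] M} (h : ∀ w, f (delta A w) = g (delta A w)) : f = g :=
  Finsupp.basisSingleOne.ext h

theorem smul_lcons_eq_of_smul_delta_eq {x y : X} {c d : A}
    (h : c • delta A [x] = d • delta A [y]) (m : List X →₀ A) :
    c • lcons A x m = d • lcons A y m := by
  -- apply the linear map that prepends each word to `m`
  have := congrArg (Finsupp.linearCombination A fun w => Finsupp.lmapDomain A A (w ++ ·) m) h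
  simpa [delta, lcons] using this

variable {star : (List X →₀ A) →ₗ[A] (List X →₀ A) →ₗ[A] (List X →₀ A)}
  {brC : X → X → A} {brX : X → X → X}

theorem star_delta_nil_left (hunitl : ∀ w : List X, star (delta A []) (delta A w) = delta A w)
    (m : List X →₀ A) : star (delta A []) m = m :=
  LinearMap.congr_fun (linearMap_ext_delta (f := star (delta A [])) (g := LinearMap.id) hunitl) m

theorem star_delta_nil_right (hunitr : ∀ w : List X, star (delta A w) (delta A []) = delta A w)
    (m : List X →₀ A) : star m (delta A []) = m :=
  LinearMap.congr_fun
    (linearMap_ext_delta (f := star.flip (delta A [])) (g := LinearMap.id) hunitr) m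

theorem star_lcons_lcons
    (hrec : ∀ (a b : X) (u v : List X),
      star (delta A (a :: u)) (delta A (b :: v)) =
        lcons A a (star (delta A u) (delta A (b :: v)))
          + lcons A b (star (delta A (a :: u)) (delta A v))
          + brC a b • lcons A (brX a b) (star (delta A u) (delta A v)))
    (a b : X) (m n : List X →₀ A) :
    star (lcons A a m) (lcons A b n) =
      lcons A a (star m (lcons A b n)) + lcons A b (star (lcons A a m) n)
        + brC a b • lcons A (brX a b) (star m n) := by
  induction m using Finsupp.induction_linear with
  | zero => simp
  | add f g hf hg => simp only [map_add, LinearMap.add_apply, smul_add, hf, hg]; abel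
  | single u r =>
  induction n using Finsupp.induction_linear with
  | zero => simp
  | add f g hf hg => simp only [map_add, smul_add, hf, hg]; abel
  | single v s =>
    simp only [single_eq_smul_delta, map_smul, LinearMap.smul_apply, lcons_delta, hrec]
    module

theorem star_star_lcons_expand
    (hrec : ∀ (a b : X) (u v : List X),
      star (delta A (a :: u)) (delta A (b :: v)) =
        lcons A a (star (delta A u) (delta A (b :: v)))
          + lcons A b (star (delta A (a :: u)) (delta A v))
          + brC a b • lcons A (brX a b) (star (delta A u) (delta A v)))
    (a b c : X) (m n p : List X →₀ A) :
    star (star (lcons A a m) (lcons A b n)) (lcons A c p) =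
      lcons A a (star (star m (lcons A b n)) (lcons A c p))
        + lcons A b (star (star (lcons A a m) n) (lcons A c p))
        + brC a b • lcons A (brX a b) (star (star m n) (lcons A c p))
        + lcons A c (star (star (lcons A a m) (lcons A b n)) p)
        + brC a c • lcons A (brX a c) (star (star m (lcons A b n)) p)
        + brC b c • lcons A (brX b c) (star (star (lcons A a m) n) p)
        + (brC a b * brC (brX a b) c) • lcons A (brX (brX a b) c) (star (star m n) p) := by
  rw [star_lcons_lcons hrec a b]
  simp only [map_add, map_smul, LinearMap.add_apply, LinearMap.smul_apply,
    star_lcons_lcons hrec _ c]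
  module

theorem star_lcons_star_expand
    (hrec : ∀ (a b : X) (u v : List X),
      star (delta A (a :: u)) (delta A (b :: v)) =
        lcons A a (star (delta A u) (delta A (b :: v)))
          + lcons A b (star (delta A (a :: u)) (delta A v))
          + brC a b • lcons A (brX a b) (star (delta A u) (delta A v)))
    (a b c : X) (m n p : List X →₀ A) :
    star (lcons A a m) (star (lcons A b n) (lcons A c p)) =
      lcons A a (star m (star (lcons A b n) (lcons A c p)))
        + lcons A b (star (lcons A a m) (star n (lcons A c p)))
        + brC a b • lcons A (brX a b) (star m (star n (lcons A c p)))
        + lcons A c (star (lcons A a m) (star (lcons A b n) p))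
        + brC a c • lcons A (brX a c) (star m (star (lcons A b n) p))
        + brC b c • lcons A (brX b c) (star (lcons A a m) (star n p))
        + (brC b c * brC a (brX b c)) • lcons A (brX a (brX b c)) (star m (star n p)) := by
  rw [star_lcons_lcons hrec b c]
  simp only [map_add, map_smul, star_lcons_lcons hrec a]
  module

theorem star_assoc_delta
    (hunitl : ∀ w : List X, star (delta A []) (delta A w) = delta A w)
    (hunitr : ∀ w : List X, star (delta A w) (delta A []) = delta A w)
    (hrec : ∀ (a b : X) (u v : List X),
      star (delta A (a :: u)) (delta A (b :: v)) =
        lcons A a (star (delta A u) (delta A (b :: v)))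
          + lcons A b (star (delta A (a :: u)) (delta A v))
          + brC a b • lcons A (brX a b) (star (delta A u) (delta A v)))
    (hassoc : ∀ a b c : X,
      (brC a b * brC (brX a b) c) • delta A [brX (brX a b) c]
        = (brC b c * brC a (brX b c)) • delta A [brX a (brX b c)])
    (w₁ w₂ w₃ : List X) :
    star (star (delta A w₁) (delta A w₂)) (delta A w₃)
      = star (delta A w₁) (star (delta A w₂) (delta A w₃)) := by
  induction w₁ generalizing w₂ w₃ with
  | nil => rw [hunitl, star_delta_nil_left hunitl]
  | cons a u ih₁ =>
  induction w₂ generalizing w₃ with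
  | nil => rw [hunitr, hunitl]
  | cons b v ih₂ =>
  induction w₃ with
  | nil => rw [star_delta_nil_right hunitr, hunitr]
  | cons c t ih₃ =>
    simp only [← lcons_delta, star_star_lcons_expand hrec,
      star_lcons_star_expand hrec]
    simp only [lcons_delta, ih₁, ih₂, ih₃,
      smul_lcons_eq_of_smul_delta_eq (hassoc a b c)]

theorem star_comm_delta
    (hunitl : ∀ w : List X, star (delta A []) (delta A w) = delta A w)
    (hunitr : ∀ w : List X, star (delta A w) (delta A []) = delta A w)
    (hrec : ∀ (a b : X) (u v : List X),
      star (delta A (a :: u)) (delta A (b :: v)) =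
        lcons A a (star (delta A u) (delta A (b :: v)))
          + lcons A b (star (delta A (a :: u)) (delta A v))
          + brC a b • lcons A (brX a b) (star (delta A u) (delta A v)))
    (hsym : ∀ a b : X, brC a b • delta A [brX a b] = brC b a • delta A [brX b a])
    (w₁ w₂ : List X) :
    star (delta A w₁) (delta A w₂) = star (delta A w₂) (delta A w₁) := by
  induction w₁ generalizing w₂ with
  | nil => rw [hunitl, hunitr]
  | cons a u ih₁ =>
  induction w₂ with
  | nil => rw [hunitr, hunitl]
  | cons b v ih₂ =>
    rw [hrec a b u v, hrec b a v u, ih₁ (b :: v), ih₂, ih₁ v,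
      smul_lcons_eq_of_smul_delta_eq (hsym a b)]
    abel

end StarProduct

open StarProduct in
/-- any product `⋆ ∈ 𝒫` is associative (hence `(A⟨X⟩, ⋆)` is a commutative
`A`-algebra, commutativity being Statement 0). -/
theorem stmt1 {A X : Type*} [CommRing A]
    (star : (List X →₀ A) →ₗ[A] (List X →₀ A) →ₗ[A] (List X →₀ A))
    (brC : X → X → A) (brX : X → X → X)
    (hunitl : ∀ w : List X, star (delta A []) (delta A w) = delta A w)
    (hunitr : ∀ w : List X, star (delta A w) (delta A []) = delta A w)
    (hrec : ∀ (a b : X) (u v : List X),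
      star (delta A (a :: u)) (delta A (b :: v)) =
        lcons A a (star (delta A u) (delta A (b :: v)))
          + lcons A b (star (delta A (a :: u)) (delta A v))
          + brC a b • lcons A (brX a b) (star (delta A u) (delta A v)))
    (hsym : ∀ a b : X, brC a b • delta A [brX a b] = brC b a • delta A [brX b a])
    (hassoc : ∀ a b c : X,
      (brC a b * brC (brX a b) c) • delta A [brX (brX a b) c]
        = (brC b c * brC a (brX b c)) • delta A [brX a (brX b c)]) :
    (∀ w₁ w₂ w₃ : List X,
        star (star (delta A w₁) (delta A w₂)) (delta A w₃)
          = star (delta A w₁) (star (delta A w₂) (delta A w₃))) ∧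
    (∀ w₁ w₂ : List X, star (delta A w₁) (delta A w₂) = star (delta A w₂) (delta A w₁)) :=
  ⟨star_assoc_delta hunitl hunitr hrec hassoc, star_comm_delta hunitl hunitr hrec hsym⟩
end

section
/- Let X be an alphabet indexed by a commutative monoid (I,×). The mulstuffle product, defined by 1⋆w = w⋆1 = w and x_i u ⋆ x_j v = x_i(u⋆x_j v) + x_j(x_i u⋆v) + x_{i×j}(u⋆v), is commutative and associative on A⟨X⟩. -/
/-!
Both identities are proved on words by induction, peeling off first letters with the defining
recursion. For associativity, both bracketings of `x_a u ⋆ x_b v ⋆ x_c w` expand into the same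
seven terms, one for each nonempty set of leading letters that are consumed; the term in which all
three are consumed starts with `x_{(a×b)×c}` on one side and `x_{a×(b×c)}` on the other.
-/

open Finsupp Finset Filter

section Words

variable {A X : Type*} [CommRing A]

theorem single_eq_smul_delta (w : List X) (r : A) : Finsupp.single w r = r • delta A w := by
  simp [delta]

theorem lcons_delta (x : X) (w : List X) : lcons A x (delta A w) = delta A (x :: w) := by
  simp [lcons, delta]

end Words

structure IsMulstuffle {A I : Type*} [CommRing A] [Mul I]
    (star : (List I →₀ A) →ₗ[A] (List I →₀ A) →ₗ[A] (List I →₀ A)) : Prop where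
  nil_star_delta : ∀ w : List I, star (delta A []) (delta A w) = delta A w
  delta_star_nil : ∀ w : List I, star (delta A w) (delta A []) = delta A w
  cons_star_cons : ∀ (a b : I) (u v : List I),
    star (delta A (a :: u)) (delta A (b :: v)) =
      lcons A a (star (delta A u) (delta A (b :: v)))
        + lcons A b (star (delta A (a :: u)) (delta A v))
        + lcons A (a * b) (star (delta A u) (delta A v))

namespace IsMulstuffle

section Mul

variable {A I : Type*} [CommRing A] [Mul I]
  {star : (List I →₀ A) →ₗ[A] (List I →₀ A) →ₗ[A] (List I →₀ A)} (h : IsMulstuffle star)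
include h

theorem nil_star (f : List I →₀ A) : star (delta A []) f = f := by
  induction f using Finsupp.induction_linear with
  | zero => simp
  | add f g hf hg => rw [map_add, hf, hg]
  | single w r => rw [single_eq_smul_delta, map_smul, h.nil_star_delta]

theorem star_nil (f : List I →₀ A) : star f (delta A []) = f := by
  induction f using Finsupp.induction_linear with
  | zero => simp
  | add f g hf hg => rw [map_add, LinearMap.add_apply, hf, hg]
  | single w r => rw [single_eq_smul_delta, map_smul, LinearMap.smul_apply, h.delta_star_nil]

theorem lcons_star_lcons (a b : I) (f g : List I →₀ A) :
    star (lcons A a f) (lcons A b g) =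
      lcons A a (star f (lcons A b g))
        + lcons A b (star (lcons A a f) g)
        + lcons A (a * b) (star f g) := by
  induction f using Finsupp.induction_linear with
  | zero => simp
  | add f₁ f₂ h₁ h₂ => simp only [map_add, LinearMap.add_apply, h₁, h₂]; abel
  | single u r =>
    induction g using Finsupp.induction_linear with
    | zero => simp
    | add g₁ g₂ h₁ h₂ => simp only [map_add, h₁, h₂]; abel
    | single v s =>
      simp only [single_eq_smul_delta, map_smul, LinearMap.smul_apply, lcons_delta,
        h.cons_star_cons, smul_add]

theorem star_star_cons_left (a b c : I) (u v w : List I) :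
    star (star (delta A (a :: u)) (delta A (b :: v))) (delta A (c :: w)) =
      lcons A a (star (star (delta A u) (delta A (b :: v))) (delta A (c :: w)))
        + lcons A b (star (star (delta A (a :: u)) (delta A v)) (delta A (c :: w)))
        + lcons A c (star (star (delta A (a :: u)) (delta A (b :: v))) (delta A w))
        + lcons A (a * b) (star (star (delta A u) (delta A v)) (delta A (c :: w)))
        + lcons A (a * c) (star (star (delta A u) (delta A (b :: v))) (delta A w))
        + lcons A (b * c) (star (star (delta A (a :: u)) (delta A v)) (delta A w))
        + lcons A (a * b * c) (star (star (delta A u) (delta A v)) (delta A w)) := by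
  -- This also expands the inner product in the `lcons A c` term of the right-hand side, which
  -- then matches the three `lcons A c` terms produced by `lcons_star_lcons` on the left.
  rw [h.cons_star_cons a b u v]
  simp only [map_add, LinearMap.add_apply]
  rw [← lcons_delta c w]
  simp only [h.lcons_star_lcons]
  simp only [lcons_delta]
  abel

theorem star_star_cons_right (a b c : I) (u v w : List I) :
    star (delta A (a :: u)) (star (delta A (b :: v)) (delta A (c :: w))) =
      lcons A a (star (delta A u) (star (delta A (b :: v)) (delta A (c :: w))))
        + lcons A b (star (delta A (a :: u)) (star (delta A v) (delta A (c :: w))))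
        + lcons A c (star (delta A (a :: u)) (star (delta A (b :: v)) (delta A w)))
        + lcons A (a * b) (star (delta A u) (star (delta A v) (delta A (c :: w))))
        + lcons A (a * c) (star (delta A u) (star (delta A (b :: v)) (delta A w)))
        + lcons A (b * c) (star (delta A (a :: u)) (star (delta A v) (delta A w)))
        + lcons A (a * (b * c)) (star (delta A u) (star (delta A v) (delta A w))) := by
  rw [h.cons_star_cons b c v w]
  simp only [map_add]
  rw [← lcons_delta a u]
  simp only [h.lcons_star_lcons]
  simp only [lcons_delta]
  abel

end Mul

theorem star_comm {A I : Type*} [CommRing A] [CommMagma I]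
    {star : (List I →₀ A) →ₗ[A] (List I →₀ A) →ₗ[A] (List I →₀ A)} (h : IsMulstuffle star)
    (w₁ w₂ : List I) : star (delta A w₁) (delta A w₂) = star (delta A w₂) (delta A w₁) := by
  induction w₁ generalizing w₂ with
  | nil => rw [h.nil_star, h.star_nil]
  | cons a u ihu =>
    induction w₂ with
    | nil => rw [h.nil_star, h.star_nil]
    | cons b v ihv =>
      rw [h.cons_star_cons a b, h.cons_star_cons b a, ihu (b :: v), ihv, ihu v, mul_comm b a]
      abel

theorem star_assoc {A I : Type*} [CommRing A] [Semigroup I]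
    {star : (List I →₀ A) →ₗ[A] (List I →₀ A) →ₗ[A] (List I →₀ A)} (h : IsMulstuffle star)
    (w₁ w₂ w₃ : List I) :
    star (star (delta A w₁) (delta A w₂)) (delta A w₃)
      = star (delta A w₁) (star (delta A w₂) (delta A w₃)) := by
  induction w₁ generalizing w₂ w₃ with
  | nil => rw [h.nil_star, h.nil_star]
  | cons a u ihu =>
    induction w₂ generalizing w₃ with
    | nil => rw [h.star_nil, h.nil_star]
    | cons b v ihv =>
      induction w₃ with
      | nil => rw [h.star_nil, h.star_nil]
      | cons c w ihw =>
        rw [h.star_star_cons_left, h.star_star_cons_right]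
        simp only [ihu, ihv, ihw, mul_assoc]

end IsMulstuffle

/-- the mulstuffle product (alphabet indexed by a commutative monoid `(I, ×)`,
bracket `x_i,x_j ↦ x_(i×j)`) is commutative and associative. -/
theorem stmt5 {A I : Type*} [CommRing A] [CommMonoid I]
    (star : (List I →₀ A) →ₗ[A] (List I →₀ A) →ₗ[A] (List I →₀ A))
    (hunitl : ∀ w : List I, star (delta A []) (delta A w) = delta A w)
    (hunitr : ∀ w : List I, star (delta A w) (delta A []) = delta A w)
    (hrec : ∀ (a b : I) (u v : List I),
      star (delta A (a :: u)) (delta A (b :: v)) =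
        lcons A a (star (delta A u) (delta A (b :: v)))
          + lcons A b (star (delta A (a :: u)) (delta A v))
          + lcons A (a * b) (star (delta A u) (delta A v))) :
    (∀ w₁ w₂ : List I, star (delta A w₁) (delta A w₂) = star (delta A w₂) (delta A w₁)) ∧
    (∀ w₁ w₂ w₃ : List I,
        star (star (delta A w₁) (delta A w₂)) (delta A w₃)
          = star (delta A w₁) (star (delta A w₂) (delta A w₃))) :=
  have h : IsMulstuffle star := ⟨hunitl, hunitr, hrec⟩
  ⟨h.star_comm, h.star_assoc⟩
end

section
/- Let (λ_n)_{n≥1} be complex numbers and for a composition s = (s₁,…,s_r) and ξ ∈ ℂ^r, define the partial multiple sum M^n_{s,ξ}(λ) = Σ_{n > n₁ > … > n_r > 0} Π_{i=1}^r ξ_i^{n_i} λ_{n_i}^{s_i}, with M^n_{(),()} = 1. Then for all n and all pairs (s,ξ), (r,ρ): M^n_{s,ξ}(λ) · M^n_{r,ρ}(λ) = M^n_{(s,ξ)⧈(r,ρ)}(λ), where ⧈ is the duffle product on pairs (composition, coefficient tuple) defined recursively by (s₁,s;ξ₁,ξ)⧈(r₁,r;ρ₁,ρ) = (s₁;ξ₁)·((s;ξ)⧈(r₁,r;ρ₁,ρ))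 + (r₁;ρ₁)·((s₁,s;ξ₁,ξ)⧈(r;ρ)) + (s₁+r₁; ξ₁ρ₁)·((s;ξ)⧈(r;ρ)), extended linearly, and M^n is extended linearly to formal sums of pairs. -/
open Finsupp Finset Filter

/-- Partial multiple sum `M^n_(s,ξ)(λ) = Σ_(n>n₁>…>n_r>0) Π ξ_i^(n_i) λ_(n_i)^(s_i)`, the word
over `ℕ × ℂ` encoding the pair (composition, coefficient tuple). -/
noncomputable def Mpart (lam : ℕ → ℂ) : ℕ → List (ℕ × ℂ) → ℂ
  | _, [] => 1
  | n, p :: l => ∑ m ∈ Finset.Ioo 0 n, p.2 ^ m * lam m ^ p.1 * Mpart lam m l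

lemma Fsum_delta (lam : ℕ → ℂ) (n : ℕ) (w : List (ℕ × ℂ)) :
    ((Finsupp.single w (1:ℂ)).sum fun w c => c * Mpart lam n w) = Mpart lam n w := by
  rw [Finsupp.sum_single_index] <;> simp

lemma Fsum_add (lam : ℕ → ℂ) (n : ℕ) (f g : List (ℕ × ℂ) →₀ ℂ) :
    ((f + g).sum fun w c => c * Mpart lam n w)
      = (f.sum fun w c => c * Mpart lam n w) + (g.sum fun w c => c * Mpart lam n w) :=
  Finsupp.sum_add_index' (fun _ => zero_mul _) (fun _ b c => add_mul b c _)

lemma Fsum_lcons (lam : ℕ → ℂ) (n : ℕ) (a : ℕ × ℂ) (f : List (ℕ × ℂ) →₀ ℂ) :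
    ((Finsupp.mapDomain (List.cons a) f).sum fun w c => c * Mpart lam n w)
      = ∑ m ∈ Finset.Ioo 0 n, a.2 ^ m * lam m ^ a.1 *
          (f.sum fun w c => c * Mpart lam m w) := by
  rw [Finsupp.sum_mapDomain_index (h := fun w c => c * Mpart lam n w)
    (fun _ => zero_mul _) (fun _ b c => add_mul b c _)]
  rw [Finsupp.sum]
  rw [show (∑ w ∈ f.support, f w * Mpart lam n (a :: w))
      = ∑ w ∈ f.support, ∑ m ∈ Finset.Ioo 0 n,
          f w * (a.2 ^ m * lam m ^ a.1 * Mpart lam m w) from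
    Finset.sum_congr rfl fun w _ => by
      rw [show Mpart lam n (a :: w)
          = ∑ m ∈ Finset.Ioo 0 n, a.2 ^ m * lam m ^ a.1 * Mpart lam m w from rfl,
        Finset.mul_sum]]
  rw [Finset.sum_comm]
  refine Finset.sum_congr rfl fun m _ => ?_
  rw [Finsupp.sum, Finset.mul_sum]
  exact Finset.sum_congr rfl fun w _ => by ring

lemma swap_sum (n : ℕ) (g : ℕ → ℕ → ℂ) :
    ∑ m ∈ Finset.Ioo 0 n, ∑ k ∈ Finset.Ioo m n, g m k
      = ∑ k ∈ Finset.Ioo 0 n, ∑ m ∈ Finset.Ioo 0 k, g m k := by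
  have h1 : ∀ m ∈ Finset.Ioo 0 n, ∑ k ∈ Finset.Ioo m n, g m k
      = ∑ k ∈ Finset.Ioo 0 n, if m < k then g m k else 0 := by
    intro m hm
    rw [← Finset.sum_filter]
    refine (Finset.sum_congr ?_ fun _ _ => rfl).symm
    ext k; simp only [Finset.mem_filter, Finset.mem_Ioo] at *; omega
  rw [Finset.sum_congr rfl h1, Finset.sum_comm]
  refine Finset.sum_congr rfl fun k hk => ?_
  rw [← Finset.sum_filter]
  refine Finset.sum_congr ?_ fun _ _ => rfl
  ext m; simp only [Finset.mem_filter, Finset.mem_Ioo] at *; omega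

lemma split_sum (n m : ℕ) (hm : m ∈ Finset.Ioo 0 n) (h : ℕ → ℂ) :
    ∑ k ∈ Finset.Ioo 0 n, h k
      = (∑ k ∈ Finset.Ioo 0 m, h k) + h m + ∑ k ∈ Finset.Ioo m n, h k := by
  simp only [Finset.mem_Ioo] at hm
  have hset : Finset.Ioo 0 n = Finset.Ioo 0 m ∪ insert m (Finset.Ioo m n) := by
    ext k; simp only [Finset.mem_union, Finset.mem_insert, Finset.mem_Ioo]; omega
  rw [hset, Finset.sum_union (by
    simp only [Finset.disjoint_left, Finset.mem_insert, Finset.mem_Ioo]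
    intro k hk; push_neg; omega),
    Finset.sum_insert (by simp), add_assoc]

/-- `M^n_(s,ξ)(λ) · M^n_(r,ρ)(λ) = M^n_((s,ξ) ⧈ (r,ρ))(λ)` where `⧈` is the
duffle product (the member of `𝒫` on the alphabet `ℕ × ℂ` with bracket
`[(s,ξ),(r,ρ)] = (s+r, ξρ)`), `M^n` being extended linearly. -/
theorem stmt15 (lam : ℕ → ℂ)
    (star : (List (ℕ × ℂ) →₀ ℂ) →ₗ[ℂ] (List (ℕ × ℂ) →₀ ℂ) →ₗ[ℂ] (List (ℕ × ℂ) →₀ ℂ))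
    (hunitl : ∀ w : List (ℕ × ℂ), star (delta ℂ []) (delta ℂ w) = delta ℂ w)
    (hunitr : ∀ w : List (ℕ × ℂ), star (delta ℂ w) (delta ℂ []) = delta ℂ w)
    (hrec : ∀ (a b : (ℕ × ℂ)) (u v : List (ℕ × ℂ)),
      star (delta ℂ (a :: u)) (delta ℂ (b :: v)) =
        lcons ℂ a (star (delta ℂ u) (delta ℂ (b :: v)))
          + lcons ℂ b (star (delta ℂ (a :: u)) (delta ℂ v))
          + lcons ℂ (a.1 + b.1, a.2 * b.2) (star (delta ℂ u) (delta ℂ v))) :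
    ∀ (n : ℕ) (w₁ w₂ : List (ℕ × ℂ)),
      Mpart lam n w₁ * Mpart lam n w₂
        = (star (delta ℂ w₁) (delta ℂ w₂)).sum (fun w c => c * Mpart lam n w) := by
  have hl : ∀ (x : ℕ × ℂ) (f : List (ℕ × ℂ) →₀ ℂ),
      lcons ℂ x f = Finsupp.mapDomain (List.cons x) f := fun _ _ => rfl
  intro n w₁ w₂
  induction w₁ generalizing n w₂ with
  | nil =>
      rw [show Mpart lam n [] = 1 from rfl, one_mul, hunitl, delta, Fsum_delta]
  | cons a u ih1 =>
    induction w₂ generalizing n with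
    | nil =>
        rw [show Mpart lam n [] = 1 from rfl, mul_one, hunitr, delta, Fsum_delta]
    | cons b v ih2 =>
      rw [hrec, Fsum_add lam, Fsum_add lam, hl, hl, hl, Fsum_lcons, Fsum_lcons, Fsum_lcons]
      rw [show Mpart lam n (a :: u)
          = ∑ m ∈ Finset.Ioo 0 n, a.2 ^ m * lam m ^ a.1 * Mpart lam m u from rfl,
        show Mpart lam n (b :: v)
          = ∑ k ∈ Finset.Ioo 0 n, b.2 ^ k * lam k ^ b.1 * Mpart lam k v from rfl,
        Finset.sum_mul_sum]
      rw [Finset.sum_congr rfl (fun m hm => split_sum n m hm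
        (fun k => (a.2 ^ m * lam m ^ a.1 * Mpart lam m u)
          * (b.2 ^ k * lam k ^ b.1 * Mpart lam k v)))]
      rw [Finset.sum_add_distrib, Finset.sum_add_distrib]
      have h1 : (∑ m ∈ Finset.Ioo 0 n, ∑ k ∈ Finset.Ioo 0 m,
            (a.2 ^ m * lam m ^ a.1 * Mpart lam m u)
              * (b.2 ^ k * lam k ^ b.1 * Mpart lam k v))
          = ∑ m ∈ Finset.Ioo 0 n, a.2 ^ m * lam m ^ a.1 *
              ((star (delta ℂ u) (delta ℂ (b :: v))).sum fun w c => c * Mpart lam m w) := by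
        refine Finset.sum_congr rfl fun m _ => ?_
        rw [← Finset.mul_sum,
          show (∑ k ∈ Finset.Ioo 0 m, b.2 ^ k * lam k ^ b.1 * Mpart lam k v)
            = Mpart lam m (b :: v) from rfl, ← ih1 m (b :: v)]
        ring
      have h2 : (∑ m ∈ Finset.Ioo 0 n,
            (a.2 ^ m * lam m ^ a.1 * Mpart lam m u)
              * (b.2 ^ m * lam m ^ b.1 * Mpart lam m v))
          = ∑ m ∈ Finset.Ioo 0 n, (a.1 + b.1, a.2 * b.2).2 ^ m * lam m ^ (a.1 + b.1, a.2 * b.2).1 *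
              ((star (delta ℂ u) (delta ℂ v)).sum fun w c => c * Mpart lam m w) := by
        refine Finset.sum_congr rfl fun m _ => ?_
        rw [← ih1 m v]
        simp only [mul_pow, pow_add]
        ring
      have h3 : (∑ m ∈ Finset.Ioo 0 n, ∑ k ∈ Finset.Ioo m n,
            (a.2 ^ m * lam m ^ a.1 * Mpart lam m u)
              * (b.2 ^ k * lam k ^ b.1 * Mpart lam k v))
          = ∑ k ∈ Finset.Ioo 0 n, b.2 ^ k * lam k ^ b.1 *
              ((star (delta ℂ (a :: u)) (delta ℂ v)).sum fun w c => c * Mpart lam k w) := by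
        rw [swap_sum]
        refine Finset.sum_congr rfl fun k _ => ?_
        rw [← Finset.sum_mul,
          show (∑ m ∈ Finset.Ioo 0 k, a.2 ^ m * lam m ^ a.1 * Mpart lam m u)
            = Mpart lam k (a :: u) from rfl, ← ih2 k]
        ring
      rw [h1, h2, h3]
      ring
end

section
/- Fix t < 1 and set λ_n = 1/(n−t). Let s = (s₁,…,s_l), s' be compositions with s₁ > 1, s'₁ > 1 and ξ, ξ' coefficient tuples with all partial products Π_{k≤i} ξ_k of modulus ≤ 1. Then the colored Hurwitz polyzetas Di(F_{ξ,t};s) = Σ_{n₁>…>n_l>0} Π ξ_i^{n_i}/(n_i − t)^{s_i} satisfy Di(F_{ξ,t};s)·Di(F_{ξ',t};s') = Di applied linearly to (s;ξ)⧈(s';ξ'): the product of two colored Hurwitz polyzetas with the same diagonal parameter t is the linear combination of colored Hurwitz polyzetas given by the duffle product. -/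
open Finsupp Finset Filter

/-!
For every `λ`, the partial sums satisfy `M^n_u · M^n_v = M^n_{u ⧈ v}` exactly: splitting the
square of indices `(m, j)` into `m > j`, `m < j` and `m = j` reproduces the three terms of the
duffle recursion. Every word in the support of `u ⧈ v` again has first exponent `≥ 2`,
exponents `≥ 1` and bounded prefix products of colors (the weights of the two factors
multiply), so all multiple sums involved converge: for `λ_m = 1/(m - t)` one has
`|λ_m| ≤ B/m`, the inner sums grow only like powers of `log n`, and the first letter
contributes `1/m²`. Letting `n → ∞` in the finite identity gives the theorem.
-/

open Topology Asymptotics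

lemma Mpart_cons (lam : ℕ → ℂ) (n : ℕ) (p : ℕ × ℂ) (l : List (ℕ × ℂ)) :
    Mpart lam n (p :: l) = ∑ m ∈ Ioo 0 n, p.2 ^ m * lam m ^ p.1 * Mpart lam m l :=
  rfl

lemma sum_Ioo_mul_sum_Ioo {R : Type*} [CommSemiring R] (F G : ℕ → R) (n : ℕ) :
    (∑ m ∈ Ioo 0 n, F m) * (∑ m ∈ Ioo 0 n, G m) =
      (∑ m ∈ Ioo 0 n, F m * ∑ j ∈ Ioo 0 m, G j)
        + (∑ m ∈ Ioo 0 n, G m * ∑ j ∈ Ioo 0 m, F j)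
        + ∑ m ∈ Ioo 0 n, F m * G m := by
  induction n with
  | zero => simp
  | succ n ih =>
    rw [Ioo_add_one_right_eq_Ioc]
    rcases Nat.eq_zero_or_pos n with rfl | hn
    · simp
    simp only [← Ioo_insert_right hn, sum_insert right_notMem_Ioo]
    rw [add_mul, mul_add, mul_add, ih]
    ring

lemma Mpart_cons_mul_Mpart_cons (lam : ℕ → ℂ) (n : ℕ) (a b : ℕ × ℂ) (u v : List (ℕ × ℂ)) :
    Mpart lam n (a :: u) * Mpart lam n (b :: v) =
      (∑ m ∈ Ioo 0 n, a.2 ^ m * lam m ^ a.1 * (Mpart lam m u * Mpart lam m (b :: v)))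
        + (∑ m ∈ Ioo 0 n, b.2 ^ m * lam m ^ b.1 * (Mpart lam m (a :: u) * Mpart lam m v))
        + ∑ m ∈ Ioo 0 n,
            (a.2 * b.2) ^ m * lam m ^ (a.1 + b.1) * (Mpart lam m u * Mpart lam m v) := by
  rw [Mpart_cons, Mpart_cons, sum_Ioo_mul_sum_Ioo]
  congr 1
  congr 1
  all_goals refine sum_congr rfl fun m _ => ?_
  · rw [Mpart_cons]; ring
  · rw [Mpart_cons]; ring
  · ring

lemma linearCombination_Mpart_lcons (lam : ℕ → ℂ) (n : ℕ) (a : ℕ × ℂ)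
    (f : List (ℕ × ℂ) →₀ ℂ) :
    linearCombination ℂ (Mpart lam n) (lcons ℂ a f) =
      ∑ m ∈ Ioo 0 n, a.2 ^ m * lam m ^ a.1 * linearCombination ℂ (Mpart lam m) f := by
  induction f using Finsupp.induction_linear with
  | zero => simp
  | add f g hf hg => simp only [map_add, hf, hg, mul_add, sum_add_distrib]
  | single w c =>
    simp only [lcons, lmapDomain_apply, mapDomain_single, linearCombination_single, smul_eq_mul,
      Mpart_cons, Finset.mul_sum]
    exact Finset.sum_congr rfl fun m _ => by ring

lemma mem_support_lcons {A X : Type*} [CommRing A] {x : X} {f : List X →₀ A} {w : List X}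
    (hw : w ∈ (lcons A x f).support) : ∃ w' ∈ f.support, w = x :: w' := by
  classical
  obtain ⟨w', hw', rfl⟩ := mem_image.1 (mapDomain_support hw)
  exact ⟨w', hw', rfl⟩

/-- The weight `c` records the colors already consumed to the left of `w`. -/
structure Admissible (c : ℂ) (w : List (ℕ × ℂ)) : Prop where
  one_le_fst : ∀ p ∈ w, 1 ≤ p.1
  norm_mul_prod_le : ∀ i, ‖c * ((w.take i).map Prod.snd).prod‖ ≤ 1

lemma Admissible.norm_le_one {c : ℂ} {w : List (ℕ × ℂ)} (hw : Admissible c w) : ‖c‖ ≤ 1 := by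
  simpa using hw.norm_mul_prod_le 0

lemma admissible_cons_iff {c : ℂ} {p : ℕ × ℂ} {l : List (ℕ × ℂ)} :
    Admissible c (p :: l) ↔ 1 ≤ p.1 ∧ ‖c‖ ≤ 1 ∧ Admissible (c * p.2) l := by
  constructor
  · intro hw
    refine ⟨hw.one_le_fst p List.mem_cons_self, hw.norm_le_one,
      fun q hq => hw.one_le_fst q (List.mem_cons_of_mem p hq), fun i => ?_⟩
    simpa [mul_assoc] using hw.norm_mul_prod_le (i + 1)
  · rintro ⟨hp, hc, hl⟩
    refine ⟨List.forall_mem_cons.2 ⟨hp, hl.one_le_fst⟩, fun i => ?_⟩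
    cases i with
    | zero => simpa using hc
    | succ i => simpa [mul_assoc] using hl.norm_mul_prod_le i

lemma Admissible.mul_left {c e : ℂ} {w : List (ℕ × ℂ)} (hw : Admissible c w) (he : ‖e‖ ≤ 1) :
    Admissible (e * c) w := by
  refine ⟨hw.one_le_fst, fun i => ?_⟩
  rw [mul_assoc, norm_mul]
  exact mul_le_one₀ he (norm_nonneg _) (hw.norm_mul_prod_le i)

structure IsDuffle
    (star : (List (ℕ × ℂ) →₀ ℂ) →ₗ[ℂ] (List (ℕ × ℂ) →₀ ℂ) →ₗ[ℂ] (List (ℕ × ℂ) →₀ ℂ)) :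
    Prop where
  nil_left : ∀ w, star (delta ℂ []) (delta ℂ w) = delta ℂ w
  nil_right : ∀ w, star (delta ℂ w) (delta ℂ []) = delta ℂ w
  cons_cons : ∀ a b u v, star (delta ℂ (a :: u)) (delta ℂ (b :: v)) =
    lcons ℂ a (star (delta ℂ u) (delta ℂ (b :: v)))
      + lcons ℂ b (star (delta ℂ (a :: u)) (delta ℂ v))
      + lcons ℂ (a.1 + b.1, a.2 * b.2) (star (delta ℂ u) (delta ℂ v))

namespace IsDuffle

variable {star : (List (ℕ × ℂ) →₀ ℂ) →ₗ[ℂ] (List (ℕ × ℂ) →₀ ℂ) →ₗ[ℂ] (List (ℕ × ℂ) →₀ ℂ)}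
  (h : IsDuffle star)
include h

theorem Mpart_mul_Mpart (lam : ℕ → ℂ) (u v : List (ℕ × ℂ)) (n : ℕ) :
    Mpart lam n u * Mpart lam n v =
      linearCombination ℂ (Mpart lam n) (star (delta ℂ u) (delta ℂ v)) := by
  induction u generalizing v n with
  | nil => rw [h.nil_left, delta, linearCombination_single, Mpart, smul_eq_mul, one_mul]
  | cons a u ihu =>
    induction v generalizing n with
    | nil => rw [h.nil_right, delta, linearCombination_single, Mpart, smul_eq_mul, one_mul, mul_one]
    | cons b v ihv =>
      simp only [Mpart_cons_mul_Mpart_cons, h.cons_cons, map_add, linearCombination_Mpart_lcons,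
        ihu, ihv]

theorem mem_support_cons_cons {a b : ℕ × ℂ} {u v w : List (ℕ × ℂ)}
    (hw : w ∈ (star (delta ℂ (a :: u)) (delta ℂ (b :: v))).support) :
    (∃ w' ∈ (star (delta ℂ u) (delta ℂ (b :: v))).support, w = a :: w') ∨
      (∃ w' ∈ (star (delta ℂ (a :: u)) (delta ℂ v)).support, w = b :: w') ∨
      ∃ w' ∈ (star (delta ℂ u) (delta ℂ v)).support, w = (a.1 + b.1, a.2 * b.2) :: w' := by
  classical
  rw [h.cons_cons] at hw
  rcases mem_union.1 (support_add hw) with hw | hw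
  · rcases mem_union.1 (support_add hw) with hw | hw
    · exact .inl (mem_support_lcons hw)
    · exact .inr (.inl (mem_support_lcons hw))
  · exact .inr (.inr (mem_support_lcons hw))

theorem exists_cons_of_mem_support {a b : ℕ × ℂ} {u v w : List (ℕ × ℂ)} {k : ℕ}
    (ha : k ≤ a.1) (hb : k ≤ b.1)
    (hw : w ∈ (star (delta ℂ (a :: u)) (delta ℂ (b :: v))).support) :
    ∃ p l, w = p :: l ∧ k ≤ p.1 := by
  rcases h.mem_support_cons_cons hw with ⟨w', -, rfl⟩ | ⟨w', -, rfl⟩ | ⟨w', -, rfl⟩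
  · exact ⟨_, _, rfl, ha⟩
  · exact ⟨_, _, rfl, hb⟩
  · exact ⟨_, _, rfl, ha.trans (Nat.le_add_right _ _)⟩

theorem admissible_of_mem_support {c d : ℂ} {u v w : List (ℕ × ℂ)} (hu : Admissible c u)
    (hv : Admissible d v) (hw : w ∈ (star (delta ℂ u) (delta ℂ v)).support) :
    Admissible (c * d) w := by
  induction u generalizing v c d w with
  | nil =>
    rw [h.nil_left] at hw
    rw [eq_of_mem_singleton (support_single_subset hw)]
    exact hv.mul_left hu.norm_le_one
  | cons a u ihu =>
    induction v generalizing d w with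
    | nil =>
      rw [h.nil_right] at hw
      rw [eq_of_mem_singleton (support_single_subset hw), mul_comm]
      exact hu.mul_left hv.norm_le_one
    | cons b v ihv =>
      obtain ⟨ha, hc, hu'⟩ := admissible_cons_iff.1 hu
      obtain ⟨hb, hd, hv'⟩ := admissible_cons_iff.1 hv
      have hcd : ‖c * d‖ ≤ 1 := by
        rw [norm_mul]; exact mul_le_one₀ hc (norm_nonneg _) hd
      rcases h.mem_support_cons_cons hw with ⟨w', hw', rfl⟩ | ⟨w', hw', rfl⟩ | ⟨w', hw', rfl⟩
      · refine admissible_cons_iff.2 ⟨ha, hcd, ?_⟩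
        simpa only [mul_right_comm] using ihu hu' hv hw'
      · refine admissible_cons_iff.2 ⟨hb, hcd, ?_⟩
        simpa only [mul_assoc] using ihv hv' hw'
      · refine admissible_cons_iff.2 ⟨ha.trans (Nat.le_add_right _ _), hcd, ?_⟩
        simpa only [mul_mul_mul_comm] using ihu hu' hv' hw'

end IsDuffle

lemma sum_Ioo_inv_le_one_add_log (n : ℕ) : ∑ m ∈ Ioo 0 n, (m : ℝ)⁻¹ ≤ 1 + Real.log n := by
  refine le_trans ?_ (harmonic_le_one_add_log n)
  rw [harmonic_eq_sum_Icc]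
  push_cast
  exact sum_le_sum_of_subset_of_nonneg (fun m hm => by simp at hm ⊢; omega)
    fun _ _ _ => by positivity

lemma summable_one_add_log_pow_div_sq (k : ℕ) :
    Summable fun m : ℕ => (1 + Real.log m) ^ k / (m : ℝ) ^ 2 := by
  have hlog : (fun x : ℝ => 1 + Real.log x) =O[atTop] Real.log :=
    (isLittleO_const_left.2 <| .inr <|
      tendsto_norm_atTop_atTop.comp Real.tendsto_log_atTop).isBigO.add (isBigO_refl _ _)
  have hpow : (fun x : ℝ => (1 + Real.log x) ^ k) =O[atTop] fun x => x ^ (1 / 2 : ℝ) := by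
    refine (hlog.pow k).trans (IsLittleO.isBigO ?_)
    simpa only [Real.rpow_natCast] using isLittleO_log_rpow_rpow_atTop (k : ℝ) one_half_pos
  have hreal : (fun x : ℝ => (1 + Real.log x) ^ k / x ^ 2) =O[atTop] fun x => x ^ (-3 / 2 : ℝ) := by
    refine (hpow.mul (isBigO_refl (fun x : ℝ => (x ^ 2)⁻¹) _)).congr' (.of_forall fun x => rfl) ?_
    filter_upwards [eventually_gt_atTop 0] with x hx
    rw [← Real.rpow_natCast, ← Real.rpow_neg hx.le, ← Real.rpow_add hx]
    norm_num
  exact summable_of_isBigO_nat (Real.summable_nat_rpow.2 (by norm_num))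
    (hreal.comp_tendsto tendsto_natCast_atTop_atTop)

section Convergence

variable {lam : ℕ → ℂ} {B : ℝ} (hlam : ∀ m : ℕ, 1 ≤ m → ‖lam m‖ ≤ B / m)
include hlam

lemma nonneg_of_forall_norm_le_div : 0 ≤ B := by
  simpa using (norm_nonneg _).trans (hlam 1 le_rfl)

lemma norm_pow_le_div_pow {m s k : ℕ} (hm : 1 ≤ m) (hks : k ≤ s) :
    ‖lam m ^ s‖ ≤ B ^ s / (m : ℝ) ^ k := by
  have hB := nonneg_of_forall_norm_le_div hlam
  calc ‖lam m ^ s‖ ≤ (B / m) ^ s := by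
        rw [norm_pow]; exact pow_le_pow_left₀ (norm_nonneg _) (hlam m hm) s
    _ = B ^ s / (m : ℝ) ^ s := div_pow B _ s
    _ ≤ B ^ s / (m : ℝ) ^ k := by gcongr; exact_mod_cast hm

/-- Each exponent `≥ 1` costs at most one harmonic sum, so `M^n` grows at most like a power
of `log n`. -/
lemma norm_pow_mul_Mpart_le {c : ℂ} {w : List (ℕ × ℂ)} (hw : Admissible c w) (n : ℕ) :
    ‖c ^ n * Mpart lam n w‖ ≤ B ^ (w.map Prod.fst).sum * (1 + Real.log n) ^ w.length := by
  have hB := nonneg_of_forall_norm_le_div hlam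
  induction w generalizing c n with
  | nil =>
    simpa [Mpart] using pow_le_one₀ (norm_nonneg c) hw.norm_le_one
  | cons p l ih =>
    obtain ⟨hp, hc, hl⟩ := admissible_cons_iff.1 hw
    set K := B ^ (l.map Prod.fst).sum * (1 + Real.log n) ^ l.length
    have hterm : ∀ m ∈ Ioo 0 n,
        ‖c ^ n * (p.2 ^ m * lam m ^ p.1 * Mpart lam m l)‖ ≤ B ^ p.1 * K * (m : ℝ)⁻¹ := by
      intro m hm
      obtain ⟨hm0, hmn⟩ := mem_Ioo.1 hm
      have hsplit : c ^ n * (p.2 ^ m * lam m ^ p.1 * Mpart lam m l) =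
          c ^ (n - m) * lam m ^ p.1 * ((c * p.2) ^ m * Mpart lam m l) := by
        rw [mul_pow, ← Nat.sub_add_cancel hmn.le, pow_add, Nat.add_sub_cancel]; ring
      have hK : ‖(c * p.2) ^ m * Mpart lam m l‖ ≤ K := by
        refine (ih hl m).trans (mul_le_mul_of_nonneg_left ?_ (by positivity))
        gcongr
      rw [hsplit, norm_mul, norm_mul, norm_pow]
      calc ‖c‖ ^ (n - m) * ‖lam m ^ p.1‖ * ‖(c * p.2) ^ m * Mpart lam m l‖
          ≤ 1 * (B ^ p.1 / (m : ℝ) ^ 1) * K := by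
            gcongr
            · exact pow_le_one₀ (norm_nonneg c) hc
            · exact norm_pow_le_div_pow hlam hm0 hp
        _ = B ^ p.1 * K * (m : ℝ)⁻¹ := by ring
    calc ‖c ^ n * Mpart lam n (p :: l)‖
        ≤ ∑ m ∈ Ioo 0 n, B ^ p.1 * K * (m : ℝ)⁻¹ := by
          rw [Mpart_cons, Finset.mul_sum]; exact norm_sum_le_of_le _ hterm
      _ = B ^ p.1 * K * ∑ m ∈ Ioo 0 n, (m : ℝ)⁻¹ := (Finset.mul_sum ..).symm
      _ ≤ B ^ p.1 * K * (1 + Real.log n) := by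
          gcongr; exact sum_Ioo_inv_le_one_add_log n
      _ = _ := by simp only [K, List.map_cons, List.sum_cons, List.length_cons]; ring

theorem exists_tendsto_Mpart {p : ℕ × ℂ} {l : List (ℕ × ℂ)} (hp : 2 ≤ p.1)
    (hw : Admissible 1 (p :: l)) :
    ∃ L, Tendsto (fun n => Mpart lam n (p :: l)) atTop (𝓝 L) := by
  obtain ⟨-, -, hl⟩ := admissible_cons_iff.1 hw
  rw [one_mul] at hl
  set f : ℕ → ℂ := fun m => p.2 ^ m * lam m ^ p.1 * Mpart lam m l
  have hf : Summable fun k => f (k + 1) := by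
    refine Summable.of_norm_bounded
      (((summable_nat_add_iff 1).2 (summable_one_add_log_pow_div_sq l.length)).mul_left
        (B ^ p.1 * B ^ (l.map Prod.fst).sum)) fun k => ?_
    have hk : 1 ≤ k + 1 := Nat.le_add_left 1 k
    calc ‖f (k + 1)‖ = ‖lam (k + 1) ^ p.1‖ * ‖p.2 ^ (k + 1) * Mpart lam (k + 1) l‖ := by
          rw [← norm_mul]; congr 1; ring
      _ ≤ B ^ p.1 / ((k + 1 : ℕ) : ℝ) ^ 2 *
            (B ^ (l.map Prod.fst).sum * (1 + Real.log (k + 1 : ℕ)) ^ l.length) := by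
          have hlam_pow := norm_pow_le_div_pow hlam hk hp
          exact mul_le_mul hlam_pow (norm_pow_mul_Mpart_le hlam hl (k + 1)) (norm_nonneg _)
            ((norm_nonneg _).trans hlam_pow)
      _ = _ := by ring
  obtain ⟨L, hL⟩ := hf
  refine ⟨L, (hL.tendsto_sum_nat.comp (tendsto_sub_atTop_nat 1)).congr fun n => ?_⟩
  rw [Function.comp_apply, Mpart_cons, ← Ico_add_one_left_eq_Ioo, zero_add, sum_Ico_eq_sum_range]
  exact sum_congr rfl fun k _ => by rw [add_comm]

end Convergence

lemma norm_one_div_natCast_sub_le {t : ℝ} (ht : t < 1) {m : ℕ} (hm : 1 ≤ m) :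
    ‖1 / ((m : ℂ) - t)‖ ≤ max 1 (1 - t)⁻¹ / m := by
  have hm' : (1 : ℝ) ≤ m := by exact_mod_cast hm
  have hmt : 0 < (m : ℝ) - t := by linarith
  have hcast : (m : ℂ) - t = ((m - t : ℝ) : ℂ) := by push_cast; ring
  rw [hcast, norm_div, norm_one, Complex.norm_real, Real.norm_of_nonneg hmt.le,
    div_le_div_iff₀ hmt (by positivity), one_mul]
  rcases le_or_gt t 0 with h0 | h0
  · nlinarith [le_max_left 1 (1 - t)⁻¹]
  · calc (m : ℝ) ≤ (1 - t)⁻¹ * (m - t) := by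
          rw [inv_mul_eq_div, le_div_iff₀ (by linarith)]; nlinarith
      _ ≤ max 1 (1 - t)⁻¹ * (m - t) := by gcongr; exact le_max_right _ _

lemma tendsto_linearCombination {ι : Type*} {F : ι → List (ℕ × ℂ) → ℂ} {l : Filter ι}
    {D : List (ℕ × ℂ) → ℂ} {f : List (ℕ × ℂ) →₀ ℂ}
    (hF : ∀ u ∈ f.support, Tendsto (fun i => F i u) l (𝓝 (D u))) :
    Tendsto (fun i => linearCombination ℂ (F i) f) l (𝓝 (f.sum fun u c => c * D u)) := by
  simp only [linearCombination_apply, Finsupp.sum, smul_eq_mul]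
  exact tendsto_finsetSum _ fun u hu => (hF u hu).const_mul _

lemma admissible_one_of {w : List (ℕ × ℂ)} (hpos : ∀ p ∈ w, 1 ≤ p.1)
    (hprod : ∀ i : ℕ, ‖((w.take (i + 1)).map Prod.snd).prod‖ ≤ 1) : Admissible 1 w :=
  ⟨hpos, fun i => by
    cases i with
    | zero => simp
    | succ i => simpa using hprod i⟩

/-- with `λ_n = 1/(n−t)`, `t < 1`, and two convergent encodings
(first exponent `> 1`, all exponents `≥ 1`, all partial products of the colors of modulus
`≤ 1`), the colored Hurwitz polyzêtas `Di(F_(ξ,t);s) = lim_n M^n` exist and satisfy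
`Di(F_(ξ,t);s) · Di(F_(ξ',t);s') = Di((s;ξ) ⧈ (s';ξ'))` (duffle relation, same diagonal
parameter `t`). -/
theorem stmt16 (t : ℝ) (ht : t < 1)
    (star : (List (ℕ × ℂ) →₀ ℂ) →ₗ[ℂ] (List (ℕ × ℂ) →₀ ℂ) →ₗ[ℂ] (List (ℕ × ℂ) →₀ ℂ))
    (hunitl : ∀ w : List (ℕ × ℂ), star (delta ℂ []) (delta ℂ w) = delta ℂ w)
    (hunitr : ∀ w : List (ℕ × ℂ), star (delta ℂ w) (delta ℂ []) = delta ℂ w)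
    (hrec : ∀ (a b : (ℕ × ℂ)) (u v : List (ℕ × ℂ)),
      star (delta ℂ (a :: u)) (delta ℂ (b :: v)) =
        lcons ℂ a (star (delta ℂ u) (delta ℂ (b :: v)))
          + lcons ℂ b (star (delta ℂ (a :: u)) (delta ℂ v))
          + lcons ℂ (a.1 + b.1, a.2 * b.2) (star (delta ℂ u) (delta ℂ v)))
    (w₁ w₂ : List (ℕ × ℂ)) (h₁ne : w₁ ≠ []) (h₂ne : w₂ ≠ [])
    (h₁head : 2 ≤ w₁.headI.1) (h₂head : 2 ≤ w₂.headI.1)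
    (h₁pos : ∀ p ∈ w₁, 1 ≤ p.1) (h₂pos : ∀ p ∈ w₂, 1 ≤ p.1)
    (h₁E : ∀ i : ℕ, ‖(((w₁.take (i + 1)).map Prod.snd).prod)‖ ≤ 1)
    (h₂E : ∀ i : ℕ, ‖(((w₂.take (i + 1)).map Prod.snd).prod)‖ ≤ 1) :
    ∃ D : List (ℕ × ℂ) → ℂ,
      Filter.Tendsto (fun n => Mpart (fun m => 1 / ((m : ℂ) - (t : ℂ))) n w₁)
          Filter.atTop (nhds (D w₁)) ∧
      Filter.Tendsto (fun n => Mpart (fun m => 1 / ((m : ℂ) - (t : ℂ))) n w₂)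
          Filter.atTop (nhds (D w₂)) ∧
      (∀ u ∈ (star (delta ℂ w₁) (delta ℂ w₂)).support,
        Filter.Tendsto (fun n => Mpart (fun m => 1 / ((m : ℂ) - (t : ℂ))) n u)
          Filter.atTop (nhds (D u))) ∧
      D w₁ * D w₂ = (star (delta ℂ w₁) (delta ℂ w₂)).sum (fun u c => c * D u) := by
  set lam : ℕ → ℂ := fun m => 1 / ((m : ℂ) - (t : ℂ))
  have hstar : IsDuffle star := ⟨hunitl, hunitr, hrec⟩
  have hconv : ∀ p l, 2 ≤ p.1 → Admissible 1 (p :: l) →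
      Tendsto (fun n => Mpart lam n (p :: l)) atTop (𝓝 (limUnder atTop (Mpart lam · (p :: l)))) :=
    fun p l hp hw => tendsto_nhds_limUnder
      (exists_tendsto_Mpart (fun m => norm_one_div_natCast_sub_le ht) hp hw)
  obtain ⟨a, u, rfl⟩ := List.exists_cons_of_ne_nil h₁ne
  obtain ⟨b, v, rfl⟩ := List.exists_cons_of_ne_nil h₂ne
  have h₁ := admissible_one_of h₁pos h₁E
  have h₂ := admissible_one_of h₂pos h₂E
  have hsupp : ∀ w ∈ (star (delta ℂ (a :: u)) (delta ℂ (b :: v))).support,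
      Tendsto (fun n => Mpart lam n w) atTop (𝓝 (limUnder atTop (Mpart lam · w))) := by
    intro w hw
    obtain ⟨p, l, rfl, hp⟩ := hstar.exists_cons_of_mem_support h₁head h₂head hw
    exact hconv p l hp (by simpa using hstar.admissible_of_mem_support h₁ h₂ hw)
  refine ⟨fun w => limUnder atTop (Mpart lam · w), hconv a u h₁head h₁, hconv b v h₂head h₂,
    hsupp, tendsto_nhds_unique ((hconv a u h₁head h₁).mul (hconv b v h₂head h₂)) ?_⟩
  simpa only [hstar.Mpart_mul_Mpart] using tendsto_linearCombination hsupp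
end
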